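/- Let G be a connected graph on n ≥ 2 vertices, C_G = G ⊙ K_1, S a maximum independent set of G, and define f on C_G by f(l_i) = 2 if v_i ∈ S, f(l_i) = 1 if v_i ∉ S, and f ≡ 0 on V(G). Then f is a boundary independent broadcast on C_G of cost n + α(G). -/

import Mathlib

/-!
Only the leaves broadcast, with strength at most 2. Every path between two leaves `lᵢ`, `lⱼ`
leaves `lᵢ` through `vᵢ` and enters `lⱼ` through `vⱼ`, so `d(lᵢ, lⱼ) ≥ d(vᵢ, vⱼ) + 2 ≥ 3`, and
`≥ 4` when `vᵢ`, `vⱼ` are non-adjacent, in particular when both lie in the independent set `S`.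
This gives boundary independence; with `n ≥ 2` it also bounds the eccentricity of every leaf
below by 3. The cost is `n` plus one for each vertex of `S`.
-/

open SimpleGraph Finset

/-- The eccentricity of a vertex: the maximum distance to any other vertex. -/
noncomputable def ecc {V : Type*} [Fintype V] (G : SimpleGraph V) (v : V) : ℕ :=
  Finset.univ.sup fun u => G.dist v u

/-- A broadcast: each vertex broadcasts with strength at most its eccentricity. -/
def IsBroadcast {V : Type*} [Fintype V] (G : SimpleGraph V) (f : V → ℕ) : Prop :=
  ∀ v, f v ≤ ecc G v

/-- A boundary independent broadcast. -/
def IsBnIndep {V : Type*} [Fintype V] (G : SimpleGraph V) (f : V → ℕ) : Prop :=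
  IsBroadcast G f ∧ ∀ u v, u ≠ v → 1 ≤ f u → 1 ≤ f v → f u + f v ≤ G.dist u v

/-- The maximum cost of a boundary independent broadcast. -/
noncomputable def alphaBn {V : Type*} [Fintype V] (G : SimpleGraph V) : ℕ :=
  sSup {k | ∃ f : V → ℕ, IsBnIndep G f ∧ ∑ v, f v = k}

/-- The independence number. -/
noncomputable def indepNum {V : Type*} [Fintype V] (G : SimpleGraph V) : ℕ :=
  sSup {k | ∃ s : Finset V, (∀ u ∈ s, ∀ v ∈ s, u ≠ v → ¬ G.Adj u v) ∧ s.card = k}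

/-- The corona `G ⊙ K₁`: attach a pendant leaf `Sum.inr v` to each vertex `Sum.inl v`. -/
def corona {V : Type*} (G : SimpleGraph V) : SimpleGraph (V ⊕ V) where
  Adj x y :=
    match x, y with
    | Sum.inl u, Sum.inl v => G.Adj u v
    | Sum.inl u, Sum.inr v => u = v
    | Sum.inr u, Sum.inl v => u = v
    | Sum.inr _, Sum.inr _ => False
  symm := by
    constructor
    rintro (u | u) (v | v) h
    · exact G.adj_symm h
    · exact h.symm
    · exact h.symm
    · exact h.elim
  loopless := by
    constructor
    rintro (u | u) h
    · exact G.irrefl h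
    · exact h.elim

namespace SimpleGraph

variable {W : Type*} {H : SimpleGraph W}

lemma Reachable.dist_add_one_le_of_forall_adj_eq {x y z : W} (hxy : H.Reachable x y)
    (hne : x ≠ y) (hz : ∀ w, H.Adj w y → w = z) : H.dist x z + 1 ≤ H.dist x y := by
  obtain ⟨p, hp⟩ := hxy.exists_walk_length_eq_dist
  have hnil : ¬p.Nil := fun h => hne h.eq
  have hpen : p.penultimate = z := hz _ (p.adj_penultimate hnil)
  calc H.dist x z + 1 = H.dist x p.penultimate + 1 := by rw [hpen]
    _ ≤ p.dropLast.length + 1 := Nat.add_le_add_right (dist_le _) 1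
    _ = H.dist x y := by rw [Walk.length_dropLast_add_one hnil, hp]

end SimpleGraph

section Corona

variable {V : Type*} {G : SimpleGraph V}

lemma corona_adj_inr_iff {w : V ⊕ V} {j : V} :
    (corona G).Adj w (Sum.inr j) ↔ w = Sum.inl j := by
  cases w with
  | inl u => exact ⟨fun h => congrArg Sum.inl h, fun h => Sum.inl_injective h⟩
  | inr u => exact ⟨False.elim, fun h => Sum.inl_ne_inr h.symm⟩

lemma corona_reachable_inl_inr_self (v : V) :
    (corona G).Reachable (Sum.inl v) (Sum.inr v) :=
  (corona_adj_inr_iff.mpr rfl).reachable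

lemma SimpleGraph.Preconnected.corona_reachable_inl (hG : G.Preconnected) (u v : V) :
    (corona G).Reachable (Sum.inl u) (Sum.inl v) :=
  (hG u v).map (⟨Sum.inl, id⟩ : G →g corona G)

lemma SimpleGraph.Preconnected.corona_reachable_inr (hG : G.Preconnected) (i j : V) :
    (corona G).Reachable (Sum.inr i) (Sum.inr j) :=
  (corona_reachable_inl_inr_self i).symm.trans
    ((hG.corona_reachable_inl i j).trans (corona_reachable_inl_inr_self j))

lemma SimpleGraph.Preconnected.corona_dist_inl_add_two_le (hG : G.Preconnected) {i j : V}
    (hij : i ≠ j) :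
    (corona G).dist (Sum.inl i) (Sum.inl j) + 2 ≤ (corona G).dist (Sum.inr i) (Sum.inr j) := by
  have hleaf_j : (corona G).dist (Sum.inr i) (Sum.inl j) + 1
      ≤ (corona G).dist (Sum.inr i) (Sum.inr j) :=
    (hG.corona_reachable_inr i j).dist_add_one_le_of_forall_adj_eq (by simpa using hij)
      fun _ => corona_adj_inr_iff.mp
  have hleaf_i : (corona G).dist (Sum.inl j) (Sum.inl i) + 1
      ≤ (corona G).dist (Sum.inl j) (Sum.inr i) :=
    ((hG.corona_reachable_inl j i).trans (corona_reachable_inl_inr_self i))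
      |>.dist_add_one_le_of_forall_adj_eq Sum.inl_ne_inr fun _ => corona_adj_inr_iff.mp
  rw [dist_comm (u := Sum.inl j), dist_comm (u := Sum.inl j)] at hleaf_i
  omega

lemma SimpleGraph.Preconnected.corona_three_le_dist_inr (hG : G.Preconnected) {i j : V}
    (hij : i ≠ j) :
    3 ≤ (corona G).dist (Sum.inr i) (Sum.inr j) := by
  have := (hG.corona_reachable_inl i j).pos_dist_of_ne (Sum.inl_injective.ne hij)
  have := hG.corona_dist_inl_add_two_le hij
  omega

lemma SimpleGraph.Preconnected.corona_four_le_dist_inr (hG : G.Preconnected) {i j : V}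
    (hij : i ≠ j) (hadj : ¬G.Adj i j) : 4 ≤ (corona G).dist (Sum.inr i) (Sum.inr j) := by
  have := (hG.corona_reachable_inl i j).one_lt_dist_of_ne_of_not_adj
    (Sum.inl_injective.ne hij) hadj
  have := hG.corona_dist_inl_add_two_le hij
  omega

end Corona

section LeafBroadcast

variable {V : Type*} [DecidableEq V]

def leafBroadcast (S : Finset V) : V ⊕ V → ℕ :=
  Sum.elim (fun _ => 0) (fun i => if i ∈ S then 2 else 1)

@[simp]
lemma leafBroadcast_inl (S : Finset V) (v : V) : leafBroadcast S (Sum.inl v) = 0 := rfl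

lemma leafBroadcast_inr (S : Finset V) (i : V) :
    leafBroadcast S (Sum.inr i) = if i ∈ S then 2 else 1 := rfl

lemma leafBroadcast_inr_le_two (S : Finset V) (i : V) : leafBroadcast S (Sum.inr i) ≤ 2 := by
  rw [leafBroadcast_inr]
  split_ifs <;> simp

lemma sum_leafBroadcast [Fintype V] (S : Finset V) :
    ∑ x, leafBroadcast S x = Fintype.card V + #S := by
  calc ∑ x, leafBroadcast S x = ∑ i, (1 + if i ∈ S then 1 else 0) := by
        rw [Fintype.sum_sum_type]
        simp only [leafBroadcast_inl, leafBroadcast_inr, sum_const_zero, zero_add]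
        exact sum_congr rfl fun i _ => by split_ifs <;> rfl
    _ = Fintype.card V + #S := by
        rw [sum_add_distrib, sum_boole]
        simp

lemma isBnIndep_corona_leafBroadcast [Fintype V] {G : SimpleGraph V} (hG : G.Preconnected)
    (hn : 2 ≤ Fintype.card V) {S : Finset V} (hS : ∀ u ∈ S, ∀ v ∈ S, u ≠ v → ¬G.Adj u v) :
    IsBnIndep (corona G) (leafBroadcast S) := by
  refine ⟨?_, ?_⟩
  · rintro (v | i)
    · simp
    · obtain ⟨j, hji⟩ := Fintype.exists_ne_of_one_lt_card hn i
      calc leafBroadcast S (Sum.inr i) ≤ 3 := (leafBroadcast_inr_le_two S i).trans (by norm_num)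
        _ ≤ (corona G).dist (Sum.inr i) (Sum.inr j) := hG.corona_three_le_dist_inr hji.symm
        _ ≤ ecc (corona G) (Sum.inr i) := le_sup (mem_univ _)
  · rintro (u | i) (v | j) hne hu hv
    · simp at hu
    · simp at hu
    · simp at hv
    · have hij : i ≠ j := fun h => hne (congrArg Sum.inr h)
      have h3 := hG.corona_three_le_dist_inr hij
      rw [leafBroadcast_inr, leafBroadcast_inr]
      split_ifs with hi hj
      · have h4 := hG.corona_four_le_dist_inr hij (hS i hi j hj hij)
        omega
      all_goals omega

end LeafBroadcast

theorem corona_leaf_broadcast_isBnIndep {V : Type*} [Fintype V] [DecidableEq V]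
    (G : SimpleGraph V) (hG : G.Connected) (hn : 2 ≤ Fintype.card V)
    (S : Finset V) (hSindep : ∀ u ∈ S, ∀ v ∈ S, u ≠ v → ¬ G.Adj u v)
    (hSmax : S.card = _root_.indepNum G)
    (f : V ⊕ V → ℕ)
    (hf : f = Sum.elim (fun _ => 0) (fun i => if i ∈ S then 2 else 1)) :
    IsBnIndep (corona G) f ∧ ∑ x, f x = Fintype.card V + _root_.indepNum G := by
  subst hf
  exact ⟨isBnIndep_corona_leafBroadcast hG.preconnected hn hSindep,
    hSmax ▸ sum_leafBroadcast S⟩
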